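/- arXiv:2305.07142 — 3 statements merged into one kernel-verified Lean document; each statement's English description precedes it below -/
import Mathlib

section
/- Let s, t ≥ 2 and z > t·s be natural numbers, set θ' = t·(2s−1) and p = min(⌊(z−1)/(t·(s−1))⌋, t−1). Define P_CA = {i + t·j : 0 ≤ i ≤ t−1, 0 ≤ j ≤ s−1}, P_CB = {t·q + θ'·l : 0 ≤ q ≤ s−1, 0 ≤ l ≤ t−1}, P_SA = (⋃_{l=0}^{p−1} {t·s + θ'·l + w : 0 ≤ w ≤ t·(s−1)−1}) ∪ {t·s + θ'·p + u : 0 ≤ u ≤ z−1−p·t·(s−1)}, and P_SB = {t·s + θ'·(t−1) + r : 0 ≤ r ≤ z−1}. Then the sumset (P_CA ∪ P_SA) + (P_CB ∪ P_SB) has cardinality (p+2)·t·s + θ'·(t−1) + 2z − 1. -/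
/-!
Write θ = t(2s−1) = ts + d with d = t(s−1), and β = ts + θ(t−1). Both supports start with an
interval: A := P_CA ∪ P_SA contains [0, θ) (p ≥ 1 because z > d), and B := P_CB ∪ P_SB contains
θ·[0, t) and [β, β + z). The first pair already covers [0, θt) ⊇ [0, β). Above β, the gaps
between consecutive elements of A have length ts < z, so sliding the window [β, β + z) along A
covers everything from β up to max A + max B. Hence the sumset is the full interval
[0, max A + max B].
-/

open Pointwise

namespace PolyDot

theorem setOf_add_mul_eq_Iio (a b : ℕ) :
    {n : ℕ | ∃ i j, i < a ∧ j < b ∧ n = i + a * j} = Set.Iio (a * b) := by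
  ext n
  simp only [Set.mem_ofPred_eq, Set.mem_Iio]
  constructor
  · rintro ⟨i, j, hi, hj, rfl⟩
    calc i + a * j < a + a * j := by omega
      _ = a * (j + 1) := by ring
      _ ≤ a * b := Nat.mul_le_mul_left a hj
  · intro hn
    have ha : 0 < a := Nat.pos_of_mul_pos_right (by omega : 0 < a * b)
    refine ⟨n % a, n / a, Nat.mod_lt n ha, ?_, (Nat.mod_add_div n a).symm⟩
    rw [Nat.div_lt_iff_lt_mul ha, mul_comm]
    exact hn

theorem Iio_mul_subset_add {A B : Set ℕ} {θ t : ℕ} (hA : ∀ i < θ, i ∈ A)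
    (hB : ∀ l < t, θ * l ∈ B) : Set.Iio (θ * t) ⊆ A + B := by
  rw [← setOf_add_mul_eq_Iio]
  rintro n ⟨i, l, hi, hl, rfl⟩
  exact Set.add_mem_add (hA i hi) (hB l hl)

theorem Ico_subset_add {A B : Set ℕ} {β z N : ℕ} (hA : ∀ m < N, ∃ x ∈ A, x ≤ m ∧ m < x + z)
    (hB : ∀ r < z, β + r ∈ B) : Set.Ico β (β + N) ⊆ A + B := by
  rintro n ⟨hβn, hnN⟩
  obtain ⟨x, hx, hxm, hmx⟩ := hA (n - β) (by omega)
  refine ⟨x, hx, β + (n - β - x), hB _ (by omega), ?_⟩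
  dsimp only
  omega

def blockSet (c θ d p e : ℕ) : Set ℕ :=
  {n | ∃ l w, l < p ∧ w < d ∧ n = c + θ * l + w} ∪ {n | ∃ u, u ≤ e ∧ n = c + θ * p + u}

section blockSet

variable {c θ d p e : ℕ}

theorem blockSet_subset_Iic (hdθ : d ≤ θ) : blockSet c θ d p e ⊆ Set.Iic (c + θ * p + e) := by
  rintro n (⟨l, w, hl, hw, rfl⟩ | ⟨u, hu, rfl⟩)
  · have hlp : θ * (l + 1) ≤ θ * p := Nat.mul_le_mul_left θ hl
    have : θ * (l + 1) = θ * l + θ := by ring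
    simp only [Set.mem_Iic]
    omega
  · simp only [Set.mem_Iic]
    omega

theorem mem_blockSet_of_lt (hp : 0 < p) {n : ℕ} (hcn : c ≤ n) (hnd : n < c + d) :
    n ∈ blockSet c θ d p e :=
  Or.inl ⟨0, n - c, hp, by omega, by omega⟩

theorem exists_mem_blockSet_le_lt_add {z m : ℕ} (hd : 0 < d) (hdθ : d ≤ θ) (hgap : θ < d + z)
    (hcm : c ≤ m) (hmz : m < c + θ * p + e + z) :
    ∃ x ∈ blockSet c θ d p e, x ≤ m ∧ m < x + z := by
  obtain ⟨k, r, hr, hm⟩ : ∃ k r, r < θ ∧ m = c + θ * k + r :=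
    ⟨(m - c) / θ, (m - c) % θ, Nat.mod_lt _ (by omega), by
      have := Nat.div_add_mod (m - c) θ; omega⟩
  by_cases hk : k < p
  · by_cases hrd : r < d
    · exact ⟨m, Or.inl ⟨k, r, hk, hrd, hm⟩, le_rfl, by omega⟩
    · exact ⟨c + θ * k + (d - 1), Or.inl ⟨k, d - 1, hk, by omega, rfl⟩, by omega, by omega⟩
  · have hpk : θ * p ≤ θ * k := Nat.mul_le_mul_left θ (by omega)
    by_cases hme : m ≤ c + θ * p + e
    · exact ⟨m, Or.inr ⟨m - (c + θ * p), by omega, by omega⟩, le_rfl, by omega⟩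
    · exact ⟨c + θ * p + e, Or.inr ⟨e, le_rfl, rfl⟩, by omega, by omega⟩

end blockSet

-- The paper's p, P_CA ∪ P_SA and P_CB ∪ P_SB.
def polyDotP (s t z : ℕ) : ℕ := min ((z - 1) / (t * (s - 1))) (t - 1)

def polyDotA (s t z : ℕ) : Set ℕ :=
  {n | ∃ i j, i < t ∧ j < s ∧ n = i + t * j} ∪
    blockSet (t * s) (t * (2 * s - 1)) (t * (s - 1)) (polyDotP s t z)
      (z - 1 - polyDotP s t z * (t * (s - 1)))

def polyDotB (s t z : ℕ) : Set ℕ :=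
  {n | ∃ q l, q < s ∧ l < t ∧ n = t * q + t * (2 * s - 1) * l} ∪
    {n | ∃ r, r < z ∧ n = t * s + t * (2 * s - 1) * (t - 1) + r}

theorem mul_two_mul_sub_one (t s : ℕ) : t * (2 * s - 1) = t * s + t * (s - 1) := by
  rw [← Nat.mul_add]
  congr 1
  omega

section polyDot

variable {s t z : ℕ}

theorem polyDotP_pos (hs : 2 ≤ s) (ht : 2 ≤ t) (hz : t * s < z) : 0 < polyDotP s t z := by
  have hd : 0 < t * (s - 1) := Nat.mul_pos (by omega) (by omega)
  have hds : t * (s - 1) ≤ t * s := Nat.mul_le_mul_left t (by omega)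
  refine lt_min ?_ (by omega)
  rw [Nat.div_pos_iff]
  omega

theorem polyDotP_mul_le (s t z : ℕ) : polyDotP s t z * (t * (s - 1)) ≤ z - 1 :=
  (Nat.mul_le_mul_right _ (min_le_left _ _)).trans (Nat.div_mul_le_self _ _)

theorem mem_polyDotA_of_lt (hs : 2 ≤ s) (ht : 2 ≤ t) (hz : t * s < z) {i : ℕ}
    (hi : i < t * (2 * s - 1)) : i ∈ polyDotA s t z := by
  rw [mul_two_mul_sub_one] at hi
  by_cases his : i < t * s
  · left
    rwa [setOf_add_mul_eq_Iio]
  · exact Or.inr (mem_blockSet_of_lt (polyDotP_pos hs ht hz) (by omega) hi)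

theorem polyDotA_subset_Iic :
    polyDotA s t z ⊆ Set.Iic (t * s + t * (2 * s - 1) * polyDotP s t z +
      (z - 1 - polyDotP s t z * (t * (s - 1)))) := by
  refine Set.union_subset ?_ (blockSet_subset_Iic (Nat.mul_le_mul_left t (by omega)))
  rw [setOf_add_mul_eq_Iio]
  intro n hn
  simp only [Set.mem_Iio, Set.mem_Iic] at hn ⊢
  omega

theorem exists_mem_polyDotA_le_lt_add (hs : 2 ≤ s) (ht : 2 ≤ t) (hz : t * s < z) {m : ℕ}
    (hm : m < t * s + t * (2 * s - 1) * polyDotP s t z +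
      (z - 1 - polyDotP s t z * (t * (s - 1))) + z) :
    ∃ x ∈ polyDotA s t z, x ≤ m ∧ m < x + z := by
  by_cases hms : m < t * s
  · exact ⟨m, Or.inl (by rwa [setOf_add_mul_eq_Iio]), le_rfl, by omega⟩
  · have hd : 0 < t * (s - 1) := Nat.mul_pos (by omega) (by omega)
    have hθ := mul_two_mul_sub_one t s
    obtain ⟨x, hx, hxm, hmx⟩ :=
      exists_mem_blockSet_le_lt_add hd (by omega) (by omega) (not_lt.1 hms) hm
    exact ⟨x, Or.inr hx, hxm, hmx⟩

theorem mul_mem_polyDotB (hs : 0 < s) {l : ℕ} (hl : l < t) :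
    t * (2 * s - 1) * l ∈ polyDotB s t z :=
  Or.inl ⟨0, l, hs, hl, by ring⟩

theorem add_mem_polyDotB {r : ℕ} (hr : r < z) :
    t * s + t * (2 * s - 1) * (t - 1) + r ∈ polyDotB s t z :=
  Or.inr ⟨r, hr, rfl⟩

theorem polyDotB_subset_Iic :
    polyDotB s t z ⊆ Set.Iic (t * s + t * (2 * s - 1) * (t - 1) + (z - 1)) := by
  rintro n (⟨q, l, hq, hl, rfl⟩ | ⟨r, hr, rfl⟩)
  · have hqs : t * q ≤ t * s := Nat.mul_le_mul_left t hq.le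
    have hlt : t * (2 * s - 1) * l ≤ t * (2 * s - 1) * (t - 1) :=
      Nat.mul_le_mul_left _ (by omega)
    simp only [Set.mem_Iic]
    omega
  · simp only [Set.mem_Iic]
    omega

theorem polyDotA_add_polyDotB (hs : 2 ≤ s) (ht : 2 ≤ t) (hz : t * s < z) :
    polyDotA s t z + polyDotB s t z =
      Set.Iic ((t * s + t * (2 * s - 1) * polyDotP s t z +
        (z - 1 - polyDotP s t z * (t * (s - 1)))) +
        (t * s + t * (2 * s - 1) * (t - 1) + (z - 1))) := by
  refine subset_antisymm ((Set.add_subset_add polyDotA_subset_Iic polyDotB_subset_Iic).trans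
    (Set.Iic_add_Iic_subset _ _)) fun n hn => ?_
  have hβ : t * s + t * (2 * s - 1) * (t - 1) ≤ t * (2 * s - 1) * t := by
    have hts : t * s ≤ t * (2 * s - 1) := Nat.mul_le_mul_left t (by omega)
    have : t * (2 * s - 1) * (t - 1) + t * (2 * s - 1) = t * (2 * s - 1) * t := by
      rw [← Nat.mul_succ]
      congr 1
      omega
    omega
  rcases lt_or_ge n (t * (2 * s - 1) * t) with hnθ | hnθ
  · exact Iio_mul_subset_add (fun i hi => mem_polyDotA_of_lt hs ht hz hi)
      (fun l hl => mul_mem_polyDotB (by omega) hl) hnθ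
  · simp only [Set.mem_Iic] at hn
    exact Ico_subset_add (fun m hm => exists_mem_polyDotA_le_lt_add hs ht hz hm)
      (fun r hr => add_mem_polyDotB hr) ⟨by omega, by omega⟩

end polyDot

end PolyDot

/-- PolyDot-CMPC worker count in the region z > ts:
|(P_CA ∪ P_SA) + (P_CB ∪ P_SB)| = (p+2)·ts + θ'·(t−1) + 2z − 1 = ψ₁,
with θ' = t·(2s−1) and p = min(⌊(z−1)/(t·(s−1))⌋, t−1). -/
theorem polydot_workers_psi1 (s t z : ℕ) (hs : 2 ≤ s) (ht : 2 ≤ t)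
    (hz : t * s < z) :
    (({n : ℕ | ∃ i j, i < t ∧ j < s ∧ n = i + t * j} ∪
      ({n : ℕ | ∃ l w, l < min ((z - 1) / (t * (s - 1))) (t - 1) ∧ w < t * (s - 1) ∧
          n = t * s + (t * (2 * s - 1)) * l + w} ∪
       {n : ℕ | ∃ u, u ≤ z - 1 - (min ((z - 1) / (t * (s - 1))) (t - 1)) * (t * (s - 1)) ∧
          n = t * s + (t * (2 * s - 1)) * (min ((z - 1) / (t * (s - 1))) (t - 1)) + u})) +
     ({n : ℕ | ∃ q l, q < s ∧ l < t ∧ n = t * q + (t * (2 * s - 1)) * l} ∪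
      {n : ℕ | ∃ r, r < z ∧ n = t * s + (t * (2 * s - 1)) * (t - 1) + r})).ncard
      = (min ((z - 1) / (t * (s - 1))) (t - 1) + 2) * (t * s) +
        (t * (2 * s - 1)) * (t - 1) + 2 * z - 1 := by
  show (PolyDot.polyDotA s t z + PolyDot.polyDotB s t z).ncard =
    (PolyDot.polyDotP s t z + 2) * (t * s) + t * (2 * s - 1) * (t - 1) + 2 * z - 1
  rw [PolyDot.polyDotA_add_polyDotB hs ht hz, Set.ncard_Iic_nat]
  have hpd := PolyDot.polyDotP_mul_le s t z
  generalize PolyDot.polyDotP s t z = p at hpd ⊢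
  have hθp : t * (2 * s - 1) * p = t * s * p + p * (t * (s - 1)) := by
    rw [PolyDot.mul_two_mul_sub_one]; ring
  have hp2 : (p + 2) * (t * s) = t * s * p + 2 * (t * s) := by ring
  omega
end

section
/- Let s, t ≥ 2 and z ≥ 1 be natural numbers with 2z ≤ t·(s−2) + 1, and set θ' = t·(2s−1). Define P_CA = {i + t·j : 0 ≤ i ≤ t−1, 0 ≤ j ≤ s−1}, P_CB = {t·q + θ'·l : 0 ≤ q ≤ s−1, 0 ≤ l ≤ t−1}, P_SA = {t·s + u : 0 ≤ u ≤ z−1}, and P_SB = {t·s + v : 0 ≤ v ≤ z−1}. Then the sumset (P_CA ∪ P_SA) + (P_CB ∪ P_SB) has cardinality t·θ' + z. -/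
/-!
The union `P_CA ∪ P_SA` is the initial segment `[0, ts + z)`, and `P_CB` is the sumset of the
progressions `t·[0, s)` and `θ'·[0, t)`. Adding a progression of step `d ≤ a` to `[0, a)` gives
again an initial segment, so `[0, ts + z) + P_CB = [0, tθ' + z)`; the bound on `z` puts
`[0, ts + z) + P_SB ⊆ [0, 2ts + 2z - 1)` inside that segment.
-/

open Pointwise Set

namespace Nat

theorem setOf_exists_lt_lt_eq_add (f g : ℕ → ℕ) (a b : ℕ) :
    {n : ℕ | ∃ i j, i < a ∧ j < b ∧ n = f i + g j} = f '' Iio a + g '' Iio b := by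
  ext n
  simp only [mem_ofPred_eq, mem_add, mem_image, mem_Iio]
  constructor
  · rintro ⟨i, j, hi, hj, rfl⟩
    exact ⟨_, ⟨i, hi, rfl⟩, _, ⟨j, hj, rfl⟩, rfl⟩
  · rintro ⟨_, ⟨i, hi, rfl⟩, _, ⟨j, hj, rfl⟩, rfl⟩
    exact ⟨i, j, hi, hj, rfl⟩

theorem setOf_exists_lt_eq_add (b z : ℕ) :
    {n : ℕ | ∃ u, u < z ∧ n = b + u} = Ico b (b + z) := by
  ext n
  simp only [mem_ofPred_eq, mem_Ico]
  constructor
  · rintro ⟨u, hu, rfl⟩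
    omega
  · intro hn
    exact ⟨n - b, by omega, by omega⟩

theorem Iio_add_image_mul_Iio {a d m : ℕ} (hd : d ≤ a) (hm : m ≠ 0) :
    Iio a + (d * ·) '' Iio m = Iio (a + d * (m - 1)) := by
  obtain ⟨m, rfl⟩ := exists_eq_succ_of_ne_zero hm
  ext n
  simp only [mem_add, mem_image, mem_Iio, succ_sub_one]
  constructor
  · rintro ⟨x, hx, _, ⟨k, hk, rfl⟩, rfl⟩
    have : d * k ≤ d * m := Nat.mul_le_mul_left d (by omega)
    omega
  · intro hn
    induction m with
    | zero => exact ⟨n, by simpa using hn, 0, ⟨0, by omega, rfl⟩, by simp⟩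
    | succ m ih =>
      by_cases hlt : n < a + d * m
      · obtain ⟨x, hx, _, ⟨k, hk, rfl⟩, hsum⟩ := ih (succ_ne_zero m) hlt
        exact ⟨x, hx, _, ⟨k, by omega, rfl⟩, hsum⟩
      · refine ⟨n - d * (m + 1), ?_, _, ⟨m + 1, by omega, rfl⟩, ?_⟩ <;>
          rw [Nat.mul_succ] at hn ⊢ <;> omega

end Nat

theorem polydot_workers_psi5_general (s t z : ℕ) (hs : 2 ≤ s) (ht : 2 ≤ t)
    (hzb : 2 * z ≤ t * (s - 2) + 1) :
    (({n : ℕ | ∃ i j, i < t ∧ j < s ∧ n = i + t * j} ∪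
      {n : ℕ | ∃ u, u < z ∧ n = t * s + u}) +
     ({n : ℕ | ∃ q l, q < s ∧ l < t ∧ n = t * q + (t * (2 * s - 1)) * l} ∪
      {n : ℕ | ∃ v, v < z ∧ n = t * s + v})).ncard
      = t * (t * (2 * s - 1)) + z := by
  set θ := t * (2 * s - 1)
  obtain ⟨hts, hθ, hθt⟩ : t * s = t + t * (s - 1) ∧ θ = t * s + t * (s - 1) ∧
      θ * (t - 1) + θ = t * θ := by
    obtain ⟨s, rfl⟩ : ∃ k, s = k + 1 := ⟨s - 1, by omega⟩
    obtain ⟨t, rfl⟩ : ∃ k, t = k + 1 := ⟨t - 1, by omega⟩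
    simp only [θ, add_tsub_cancel_right, show 2 * (s + 1) - 1 = 2 * s + 1 by omega]
    refine ⟨?_, ?_, ?_⟩ <;> ring
  have hA : {n : ℕ | ∃ i j, i < t ∧ j < s ∧ n = i + t * j} ∪
      {n : ℕ | ∃ u, u < z ∧ n = t * s + u} = Iio (t * s + z) := by
    rw [Nat.setOf_exists_lt_lt_eq_add (fun i => i), image_id', Nat.setOf_exists_lt_eq_add,
      Nat.Iio_add_image_mul_Iio le_rfl (by omega), ← hts]
    exact Iio_union_Ico_eq_Iio (Nat.le_add_right _ _)
  have hCB : Iio (t * s + z) + {n : ℕ | ∃ q l, q < s ∧ l < t ∧ n = t * q + θ * l} =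
      Iio (t * θ + z) := by
    rw [Nat.setOf_exists_lt_lt_eq_add, ← add_assoc,
      Nat.Iio_add_image_mul_Iio (by omega) (by omega),
      Nat.Iio_add_image_mul_Iio (by omega) (by omega)]
    congr 1
    omega
  have hSB : Iio (t * s + z) + {n : ℕ | ∃ v, v < z ∧ n = t * s + v} ⊆ Iio (t * θ + z) := by
    rw [Nat.setOf_exists_lt_eq_add]
    rintro _ ⟨x, hx, y, hy, rfl⟩
    simp only [mem_Iio, mem_Ico] at hx hy ⊢
    have : 2 * θ ≤ t * θ := Nat.mul_le_mul_right θ ht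
    have : t * (s - 2) ≤ t * (s - 1) := Nat.mul_le_mul_left t (by omega)
    omega
  rw [hA, add_union, hCB, union_eq_left.mpr hSB, ncard_Iio_nat]

/-- PolyDot-CMPC worker count in the region 2z ≤ t·(s−2)+1:
|(P_CA ∪ P_SA) + (P_CB ∪ P_SB)| = t·θ' + z = ψ₅, with θ' = t·(2s−1). -/
theorem polydot_workers_psi5 (s t z : ℕ) (hs : 2 ≤ s) (ht : 2 ≤ t)
    (hz : 1 ≤ z) (hzb : 2 * z ≤ t * (s - 2) + 1) :
    (({n : ℕ | ∃ i j, i < t ∧ j < s ∧ n = i + t * j} ∪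
      {n : ℕ | ∃ u, u < z ∧ n = t * s + u}) +
     ({n : ℕ | ∃ q l, q < s ∧ l < t ∧ n = t * q + (t * (2 * s - 1)) * l} ∪
      {n : ℕ | ∃ v, v < z ∧ n = t * s + v})).ncard
      = t * (t * (2 * s - 1)) + z :=
  polydot_workers_psi5_general s t z hs ht hzb
end

section
/- Let s ≥ 1, t ≥ 1 and λ ≥ 0 be natural numbers and θ = t·s + λ. Then the sumset {j + s·i : 0 ≤ j ≤ s−1, 0 ≤ i ≤ t−1} + {(s−1−k) + θ·l : 0 ≤ k ≤ s−1, 0 ≤ l ≤ t−1} equals the union of intervals ⋃_{l=0}^{t−1} {n : θ·l ≤ n ≤ θ·l + t·s + s − 2}. -/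
open Pointwise

/-!
Writing `θ = t·s + λ`, the support of `C_A` is the whole interval `[0, ts)` (base-`s` digits
`j + s·i`), while the support of `C_B`, after reflecting `k ↦ s − 1 − k`, is the union of the
blocks `[θl, θl + s)` for `l < t`. Adding `[0, ts)` to a block
`[θl, θl + s)` gives `[θl, θl + ts + s − 1)`.
-/

theorem Nat.setOf_add_mul_eq_Iio (s t : ℕ) :
    {n : ℕ | ∃ j i, j < s ∧ i < t ∧ n = j + s * i} = Set.Iio (s * t) := by
  ext n
  simp only [Set.mem_ofPred_eq, Set.mem_Iio]
  constructor
  · rintro ⟨j, i, hj, hi, rfl⟩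
    calc j + s * i < s * (i + 1) := by rw [Nat.mul_succ]; omega
      _ ≤ s * t := Nat.mul_le_mul_left s hi
  · intro hn
    have hs : 0 < s := Nat.pos_of_mul_pos_right (Nat.zero_lt_of_lt hn)
    exact ⟨n % s, n / s, Nat.mod_lt n hs, (Nat.div_lt_iff_lt_mul hs).2 (by rwa [Nat.mul_comm]),
      (Nat.mod_add_div n s).symm⟩

theorem Nat.setOf_sub_add_mul_eq_biUnion_Ico (s c t : ℕ) :
    {n : ℕ | ∃ k l, k < s ∧ l < t ∧ n = (s - 1 - k) + c * l}
      = ⋃ l < t, Set.Ico (c * l) (c * l + s) := by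
  ext n
  simp only [Set.mem_ofPred_eq, Set.mem_iUnion, Set.mem_Ico, exists_prop]
  constructor
  · rintro ⟨k, l, hk, hl, rfl⟩
    exact ⟨l, hl, by omega⟩
  · rintro ⟨l, hl, hn⟩
    exact ⟨s - 1 - (n - c * l), l, by omega, hl, by omega⟩

theorem Nat.Iio_add_Ico {p a b : ℕ} (hp : 0 < p) (hab : a < b) :
    Set.Iio p + Set.Ico a b = Set.Ico a (p + b - 1) := by
  ext n
  simp only [Set.mem_add, Set.mem_Iio, Set.mem_Ico]
  constructor
  · rintro ⟨x, hx, y, hy, rfl⟩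
    omega
  · intro hn
    exact ⟨min (n - a) (p - 1), by omega, n - min (n - a) (p - 1), by omega, by omega⟩

theorem age_coded_sumset_general (s t lam : ℕ) (hs : 1 ≤ s) :
    ({n : ℕ | ∃ j i, j < s ∧ i < t ∧ n = j + s * i} +
     {n : ℕ | ∃ k l, k < s ∧ l < t ∧ n = (s - 1 - k) + (t * s + lam) * l})
      = {n : ℕ | ∃ l, l < t ∧ (t * s + lam) * l ≤ n ∧
          n ≤ (t * s + lam) * l + t * s + s - 2} := by
  rw [Nat.setOf_add_mul_eq_Iio, Nat.setOf_sub_add_mul_eq_biUnion_Ico, Set.add_iUnion₂]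
  ext n
  simp only [Set.mem_iUnion, Set.mem_ofPred_eq, exists_prop]
  refine exists_congr fun l => and_congr_right fun hl => ?_
  have hst : 0 < s * t := Nat.mul_pos hs (by omega)
  rw [Nat.Iio_add_Ico hst (by omega), Set.mem_Ico, Nat.mul_comm t s]
  omega

/-- For s, t ≥ 1, λ ≥ 0 and θ = t·s + λ, the sumset
P_CA + P_CB of the AGE coded supports equals
⋃_{l<t} {n : θ·l ≤ n ≤ θ·l + t·s + s − 2}. -/
theorem age_coded_sumset (s t lam : ℕ) (hs : 1 ≤ s) (ht : 1 ≤ t) :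
    ({n : ℕ | ∃ j i, j < s ∧ i < t ∧ n = j + s * i} +
     {n : ℕ | ∃ k l, k < s ∧ l < t ∧ n = (s - 1 - k) + (t * s + lam) * l})
      = {n : ℕ | ∃ l, l < t ∧ (t * s + lam) * l ≤ n ∧
          n ≤ (t * s + lam) * l + t * s + s - 2} :=
  age_coded_sumset_general s t lam hs
end
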